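/- arXiv:math/0703750 — 2 statements merged into one kernel-verified Lean document; each statement's English description precedes it below -/
import Mathlib

section
/- The steady state of the mean-field avalanche coagulation-fragmentation system, given by $c_k = a_k g^{k-1} 2^{-k}$ with $a_1=1$, $a_k=\frac{1}{k+1}\sum_{j=1}^{k-1}a_ja_{k-j}$, $g=2q$ where $q\in(0,1)$ solves $\sum_{k\geq 1}a_k q^k = 1$, satisfies $c_1 = 1/2$ and $\sum_{k\geq 1} k^2 c_k = 2$. -/
open Finset ENNReal

/-- The steady state `c_k = a_k g^{k-1} 2^{-k}` of the mean-field avalanche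
coagulation-fragmentation system (with `a₁ = 1`, `a_k = (1/(k+1)) ∑_{j=1}^{k-1} a_j a_{k-j}`,
`g = 2q` where `q ∈ (0,1)` solves `∑_{k≥1} a_k q^k = 1`) satisfies
`c₁ = 1/2` and `∑_{k≥1} k² c_k = 2`. -/
theorem meanfield_steady_state_moments (a : ℕ → ℝ) (h1 : a 1 = 1)
    (hrec : ∀ k, 2 ≤ k → a k = (1 / (k + 1 : ℝ)) * ∑ j ∈ Finset.Ico 1 k, a j * a (k - j))
    (q : ℝ) (hq : q ∈ Set.Ioo (0 : ℝ) 1)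
    (hroot : (∑' j : ℕ, a (j + 1) * q ^ (j + 1)) = 1)
    (g : ℝ) (hg : g = 2 * q)
    (c : ℕ → ℝ) (hc : ∀ k, 1 ≤ k → c k = a k * g ^ (k - 1) / 2 ^ k) :
    c 1 = 1 / 2 ∧ (∑' k : ℕ, ((k : ℝ) + 1) ^ 2 * c (k + 1)) = 2 := by
  obtain ⟨hq0, hq1⟩ := hq
  have hqnn : (0:ℝ) ≤ q := hq0.le
  have hqne : q ≠ 0 := ne_of_gt hq0
  constructor
  · rw [hc 1 le_rfl, h1]; norm_num
  -- nonnegativity of a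
  have ha : ∀ n, 1 ≤ n → 0 ≤ a n := by
    intro n
    induction n using Nat.strong_induction_on with
    | _ n ih =>
      intro hn
      rcases Nat.lt_or_ge n 2 with h2 | h2
      · interval_cases n
        · rw [h1]; norm_num
      · rw [hrec n h2]
        apply mul_nonneg (by positivity)
        apply Finset.sum_nonneg
        intro j hj
        simp only [Finset.mem_Ico] at hj
        exact mul_nonneg (ih j hj.2 hj.1) (ih (n - j) (by omega) (by omega))
  set P : ℕ → ℝ≥0∞ := fun n => if n = 0 then 0 else ENNReal.ofReal (a n * q ^ n) with hPdef
  have hP0 : P 0 = 0 := rfl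
  have hPs : ∀ k : ℕ, P (k + 1) = ENNReal.ofReal (a (k + 1) * q ^ (k + 1)) := by
    intro k; simp [hPdef]
  have hnn : ∀ k : ℕ, 0 ≤ a (k + 1) * q ^ (k + 1) :=
    fun k => mul_nonneg (ha _ (by omega)) (pow_nonneg hqnn _)
  have hsum : Summable (fun j : ℕ => a (j + 1) * q ^ (j + 1)) := by
    by_contra h
    rw [tsum_eq_zero_of_not_summable h] at hroot
    norm_num at hroot
  -- total mass 1
  have hT : ∑' n, P n = 1 := by
    rw [tsum_eq_zero_add' ENNReal.summable, hP0, zero_add]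
    rw [tsum_congr hPs, ← ENNReal.ofReal_tsum_of_nonneg hnn hsum, hroot, ENNReal.ofReal_one]
  -- regrouping lemma
  have hregroup : ∀ f : ℕ × ℕ → ℝ≥0∞,
      ∑' p : ℕ × ℕ, f p = ∑' n : ℕ, ∑ p ∈ Finset.HasAntidiagonal.antidiagonal n, f p := by
    intro f
    rw [← Finset.HasAntidiagonal.sigmaAntidiagonalEquivProd.tsum_eq, ENNReal.tsum_sigma']
    exact tsum_congr fun n => Finset.tsum_subtype (Finset.HasAntidiagonal.antidiagonal n) f
  -- Cauchy product
  have hprod : ∑' p : ℕ × ℕ, P p.1 * P p.2 = 1 := by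
    rw [Summable.tsum_prod' ENNReal.summable fun _ => ENNReal.summable]
    calc ∑' (i : ℕ) (j : ℕ), P i * P j = ∑' i : ℕ, P i * 1 := by
          exact tsum_congr fun i => by rw [ENNReal.tsum_mul_left, hT]
      _ = 1 := by simp [hT]
  set S : ℕ → ℝ≥0∞ := fun n => ∑ p ∈ Finset.HasAntidiagonal.antidiagonal n, P p.1 * P p.2 with hSdef
  have hE : ∑' n, S n = 1 := by rw [← hregroup]; exact hprod
  -- value of S n
  have hSval : ∀ n, 2 ≤ n → S n = ((n : ℝ≥0∞) + 1) * P n := by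
    intro n hn
    have hn0 : n ≠ 0 := by omega
    rw [hSdef]
    simp only
    rw [Finset.Nat.sum_antidiagonal_eq_sum_range_succ_mk]
    have hsub : Finset.Ico 1 n ⊆ Finset.range (n + 1) := by
      intro x hx; simp only [Finset.mem_Ico] at hx; simp [Finset.mem_range]; omega
    rw [← Finset.sum_subset hsub]
    · have hterm : ∀ k ∈ Finset.Ico 1 n,
          P k * P (n - k) = ENNReal.ofReal (a k * a (n - k) * q ^ n) := by
        intro k hk
        simp only [Finset.mem_Ico] at hk
        have hk0 : k ≠ 0 := by omega
        have hnk0 : n - k ≠ 0 := by omega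
        rw [hPdef]
        simp only [hk0, hnk0, if_false]
        rw [← ENNReal.ofReal_mul (mul_nonneg (ha k (by omega)) (pow_nonneg hqnn _))]
        congr 1
        have hpow : q ^ k * q ^ (n - k) = q ^ n := by
          rw [← pow_add]; congr 1; omega
        rw [← hpow]; ring
      rw [Finset.sum_congr rfl hterm, ← ENNReal.ofReal_sum_of_nonneg (fun i hi => by
        exact mul_nonneg (mul_nonneg (ha i (by simp [Finset.mem_Ico] at hi; omega))
          (ha (n - i) (by simp [Finset.mem_Ico] at hi; omega))) (pow_nonneg hqnn _))]
      have hsum_eq : ∑ i ∈ Finset.Ico 1 n, a i * a (n - i) * q ^ n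
          = ((n : ℝ) + 1) * a n * q ^ n := by
        rw [← Finset.sum_mul]
        congr 1
        have := hrec n hn
        have hne : ((n : ℝ) + 1) ≠ 0 := by positivity
        field_simp at this
        linarith [this]
      rw [hsum_eq]
      rw [hPdef]; simp only [hn0, if_false]
      rw [mul_assoc, ENNReal.ofReal_mul (by positivity : (0:ℝ) ≤ (n:ℝ) + 1)]
      congr 1
      simp [ENNReal.ofReal_add, ENNReal.ofReal_natCast]
    · intro x hx hxn
      simp only [Finset.mem_range] at hx
      simp only [Finset.mem_Ico] at hxn
      have : x = 0 ∨ x = n := by omega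
      rcases this with h | h
      · subst h; rw [hP0, zero_mul]
      · subst h; rw [Nat.sub_self, hP0, mul_zero]
  -- S 0 and S 1 vanish
  have hS0 : S 0 = 0 := by
    rw [hSdef]; simp only
    rw [Finset.Nat.sum_antidiagonal_eq_sum_range_succ_mk]
    simp [hP0]
  have hS1 : S 1 = 0 := by
    rw [hSdef]; simp only
    rw [Finset.Nat.sum_antidiagonal_eq_sum_range_succ_mk]
    rw [Finset.sum_range_succ, Finset.sum_range_one]
    simp [hP0]
  have hP1 : P 1 = ENNReal.ofReal q := by
    rw [hPdef]; simp [h1]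
  -- first moment
  have key1 : ∀ n : ℕ, ((n : ℝ≥0∞) + 1) * P n = S n + (if n = 1 then 2 * P 1 else 0) := by
    intro n
    match n with
    | 0 => simp [hP0, hS0]
    | 1 => rw [hS1]; norm_num
    | (m+2) => rw [hSval (m+2) (by omega)]; simp
  have hM1 : ∑' n : ℕ, (n : ℝ≥0∞) * P n = 2 * ENNReal.ofReal q := by
    have hL : ∑' n : ℕ, ((n : ℝ≥0∞) + 1) * P n
        = (∑' n : ℕ, (n : ℝ≥0∞) * P n) + 1 := by
      calc ∑' n : ℕ, ((n : ℝ≥0∞) + 1) * P n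
          = ∑' n : ℕ, ((n : ℝ≥0∞) * P n + P n) := by
            exact tsum_congr fun n => by ring
        _ = (∑' n : ℕ, (n : ℝ≥0∞) * P n) + 1 := by rw [ENNReal.tsum_add, hT]
    have hR : ∑' n : ℕ, ((n : ℝ≥0∞) + 1) * P n = 1 + 2 * P 1 := by
      rw [tsum_congr key1, ENNReal.tsum_add, hE, tsum_ite_eq]
    rw [hR, hP1] at hL
    have := hL.symm
    rw [add_comm (1 : ℝ≥0∞) (2 * ENNReal.ofReal q)] at this
    exact (ENNReal.add_left_inj ENNReal.one_ne_top).mp this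
  -- weighted Cauchy product
  have hW : ∑' p : ℕ × ℕ, ((p.1 : ℝ≥0∞) + (p.2 : ℝ≥0∞)) * (P p.1 * P p.2)
      = 2 * (2 * ENNReal.ofReal q) := by
    have hsplit : ∀ p : ℕ × ℕ, ((p.1 : ℝ≥0∞) + (p.2 : ℝ≥0∞)) * (P p.1 * P p.2)
        = ((p.1 : ℝ≥0∞) * P p.1) * P p.2 + P p.1 * ((p.2 : ℝ≥0∞) * P p.2) := by
      intro p; ring
    rw [tsum_congr hsplit, ENNReal.tsum_add]
    have h1' : ∑' p : ℕ × ℕ, ((p.1 : ℝ≥0∞) * P p.1) * P p.2 = 2 * ENNReal.ofReal q := by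
      rw [Summable.tsum_prod' ENNReal.summable fun _ => ENNReal.summable]
      calc ∑' (i : ℕ) (j : ℕ), ((i : ℝ≥0∞) * P i) * P j
          = ∑' i : ℕ, (i : ℝ≥0∞) * P i := by
            exact tsum_congr fun i => by rw [ENNReal.tsum_mul_left, hT, mul_one]
        _ = 2 * ENNReal.ofReal q := hM1
    have h2' : ∑' p : ℕ × ℕ, P p.1 * ((p.2 : ℝ≥0∞) * P p.2) = 2 * ENNReal.ofReal q := by
      rw [Summable.tsum_prod' ENNReal.summable fun _ => ENNReal.summable]
      calc ∑' (i : ℕ) (j : ℕ), P i * ((j : ℝ≥0∞) * P j)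
          = ∑' i : ℕ, P i * (2 * ENNReal.ofReal q) := by
            exact tsum_congr fun i => by rw [ENNReal.tsum_mul_left, hM1]
        _ = 2 * ENNReal.ofReal q := by rw [ENNReal.tsum_mul_right, hT, one_mul]
    rw [h1', h2']; ring
  -- regroup the weighted sum
  have hWn : ∑' n : ℕ, (n : ℝ≥0∞) * S n = 2 * (2 * ENNReal.ofReal q) := by
    rw [← hW, hregroup]
    refine tsum_congr fun n => ?_
    rw [hSdef]; simp only
    rw [Finset.mul_sum]
    refine Finset.sum_congr rfl fun p hp => ?_
    rw [Finset.HasAntidiagonal.mem_antidiagonal] at hp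
    rw [← hp]
    push_cast
    ring
  -- second moment
  have key2 : ∀ n : ℕ, (n : ℝ≥0∞) * (((n : ℝ≥0∞) + 1) * P n)
      = (n : ℝ≥0∞) * S n + (if n = 1 then 2 * P 1 else 0) := by
    intro n
    rw [key1 n, mul_add]
    congr 1
    match n with
    | 0 => simp
    | 1 => norm_num
    | (m+2) => simp
  have hM2 : ∑' n : ℕ, (n : ℝ≥0∞) ^ 2 * P n = 4 * ENNReal.ofReal q := by
    have hL : ∑' n : ℕ, (n : ℝ≥0∞) * (((n : ℝ≥0∞) + 1) * P n)
        = (∑' n : ℕ, (n : ℝ≥0∞) ^ 2 * P n) + 2 * ENNReal.ofReal q := by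
      calc ∑' n : ℕ, (n : ℝ≥0∞) * (((n : ℝ≥0∞) + 1) * P n)
          = ∑' n : ℕ, ((n : ℝ≥0∞) ^ 2 * P n + (n : ℝ≥0∞) * P n) := by
            exact tsum_congr fun n => by ring
        _ = _ := by rw [ENNReal.tsum_add, hM1]
    have hR : ∑' n : ℕ, (n : ℝ≥0∞) * (((n : ℝ≥0∞) + 1) * P n)
        = 2 * (2 * ENNReal.ofReal q) + 2 * ENNReal.ofReal q := by
      rw [tsum_congr key2, ENNReal.tsum_add, hWn, tsum_ite_eq, hP1]
    rw [hR] at hL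
    have h2ne : (2 : ℝ≥0∞) * ENNReal.ofReal q ≠ ⊤ :=
      ENNReal.mul_ne_top (by norm_num) ENNReal.ofReal_ne_top
    have := (ENNReal.add_left_inj h2ne).mp hL
    rw [← this]; ring
  -- convert to a real sum
  set u : ℕ → ℝ := fun k => ((k : ℝ) + 1) ^ 2 * (a (k + 1) * q ^ (k + 1)) with hudef
  have hunn : ∀ k, 0 ≤ u k := fun k => mul_nonneg (by positivity) (hnn k)
  have hshift : ∑' k : ℕ, ENNReal.ofReal (u k) = 4 * ENNReal.ofReal q := by
    rw [← hM2]
    conv_rhs => rw [tsum_eq_zero_add' ENNReal.summable]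
    rw [hP0, mul_zero, zero_add]
    refine tsum_congr fun k => ?_
    rw [hPs k, hudef]
    simp only
    rw [ENNReal.ofReal_mul (by positivity)]
    congr 1
    have hcast : ((k:ℝ) + 1) ^ 2 = (((k + 1) ^ 2 : ℕ) : ℝ) := by push_cast; ring
    rw [hcast, ENNReal.ofReal_natCast]
    push_cast
    ring
  have hne : ∑' k : ℕ, ENNReal.ofReal (u k) ≠ ⊤ := by
    rw [hshift]; exact ENNReal.mul_ne_top (by norm_num) ENNReal.ofReal_ne_top
  have huval : ∑' k : ℕ, u k = 4 * q := by
    calc ∑' k : ℕ, u k = ∑' k : ℕ, (ENNReal.ofReal (u k)).toReal :=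
          tsum_congr fun k => (ENNReal.toReal_ofReal (hunn k)).symm
      _ = (∑' k : ℕ, ENNReal.ofReal (u k)).toReal :=
          (ENNReal.tsum_toReal_eq fun k => ENNReal.ofReal_ne_top).symm
      _ = (4 * ENNReal.ofReal q).toReal := by rw [hshift]
      _ = 4 * q := by
          rw [ENNReal.toReal_mul, ENNReal.toReal_ofReal hqnn]
          norm_num
  have hterm : ∀ k : ℕ, ((k : ℝ) + 1) ^ 2 * c (k + 1) = u k * (2 * q)⁻¹ := by
    intro k
    rw [hc (k + 1) (by omega), hg, hudef]
    simp only [Nat.add_sub_cancel]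
    rw [mul_pow]
    field_simp
    ring
  rw [tsum_congr hterm, tsum_mul_right, huval]
  field_simp
  ring
end

section
/- Let $(Y_i)_{i\geq 1}$ be i.i.d. with $q:=E[e^{\gamma Y_1}]<1$ for some $\gamma>0$, let $R_0\geq 0$ be independent with $E[e^{\gamma R_0}]<\infty$, and let $(Z_t)$ be an independent rate-1 Poisson process. Set $S_n = Y_1+\cdots+Y_n$ and $R_t = R_0 + S_{Z_t}$. Then there exist constants $A>0$, $a>0$ such that $P[R_t > 0] \leq A e^{-at}$ for all $t\geq 0$. -/
open MeasureTheory Real ProbabilityTheory ENNReal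

/-- Let `(Y_i)` be i.i.d. with `q := E[e^{γ Y₁}] < 1` for some `γ > 0`, `R₀ ≥ 0` independent
with `E[e^{γ R₀}] < ∞`, and `(Z_t)` an independent rate-1 Poisson process. With
`S_n = Y₁ + ⋯ + Y_n` and `R_t = R₀ + S_{Z_t}`, there exist `A > 0` and `a > 0` such that
`P[R_t > 0] ≤ A e^{-at}` for all `t ≥ 0`. -/
theorem random_walk_poisson_time_tail {Ω : Type*} [MeasurableSpace Ω] (μ : Measure Ω)
    [IsProbabilityMeasure μ] (Y : ℕ → Ω → ℝ) (hYmeas : ∀ i, Measurable (Y i))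
    (hindep : iIndepFun Y μ)
    (hident : ∀ i, Measure.map (Y i) μ = Measure.map (Y 0) μ)
    (γ : ℝ) (hγ : 0 < γ)
    (q : ℝ≥0∞) (hq : q = ∫⁻ ω, ENNReal.ofReal (Real.exp (γ * Y 0 ω)) ∂μ) (hq1 : q < 1)
    (R0 : Ω → ℝ) (hR0meas : Measurable R0) (hR0pos : ∀ ω, 0 ≤ R0 ω)
    (hR0indep : IndepFun R0 (fun ω => fun n => Y n ω) μ)
    (hR0exp : (∫⁻ ω, ENNReal.ofReal (Real.exp (γ * R0 ω)) ∂μ) < ⊤)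
    (Z : ℝ → Ω → ℕ) (hZmeas : ∀ t, Measurable (Z t))
    (hZlaw : ∀ t : ℝ, 0 ≤ t → ∀ n : ℕ,
      μ {ω | Z t ω = n} = ENNReal.ofReal (Real.exp (-t) * t ^ n / n.factorial))
    (hZindep : ∀ t : ℝ, IndepFun (fun ω => (R0 ω, fun n => Y n ω)) (Z t) μ) :
    ∃ A > (0 : ℝ), ∃ a > (0 : ℝ), ∀ t : ℝ, 0 ≤ t →
      μ {ω | 0 < R0 ω + ∑ i ∈ Finset.range (Z t ω), Y i ω} ≤
        ENNReal.ofReal (A * Real.exp (-a * t)) := by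
  classical
  set C : ℝ≥0∞ := ∫⁻ ω, ENNReal.ofReal (Real.exp (γ * R0 ω)) ∂μ with hC
  -- the exponential map
  set φ : ℝ → ℝ≥0∞ := fun x => ENNReal.ofReal (Real.exp (γ * x)) with hφ
  have hφmeas : Measurable φ := (measurable_const.mul measurable_id).exp.ennreal_ofReal
  have hqtop : q ≠ ⊤ := (hq1.trans one_lt_top).ne
  set q' : ℝ := q.toReal with hq'def
  have hq'0 : 0 ≤ q' := ENNReal.toReal_nonneg
  have hq'1 : q' < 1 := by
    rw [hq'def]
    exact ENNReal.toReal_lt_of_lt_ofReal (by simpa using hq1)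
  have hqofReal : q = ENNReal.ofReal q' := (ENNReal.ofReal_toReal hqtop).symm
  -- mgf of each Y i is q
  have hYq : ∀ i, (∫⁻ ω, φ (Y i ω) ∂μ) = q := by
    intro i
    rw [hq]
    calc ∫⁻ ω, φ (Y i ω) ∂μ = ∫⁻ x, φ x ∂(Measure.map (Y i) μ) :=
          (lintegral_map hφmeas (hYmeas i)).symm
      _ = ∫⁻ x, φ x ∂(Measure.map (Y 0) μ) := by rw [hident i]
      _ = ∫⁻ ω, φ (Y 0 ω) ∂μ := lintegral_map hφmeas (hYmeas 0)
  -- mgf of the partial sums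
  have hSmeas : ∀ n, Measurable (fun ω => ∑ i ∈ Finset.range n, Y i ω) := fun n =>
    Finset.measurable_sum _ fun i _ => hYmeas i
  have hSq : ∀ n, (∫⁻ ω, φ (∑ i ∈ Finset.range n, Y i ω) ∂μ) = q ^ n := by
    intro n
    induction n with
    | zero => simp [hφ]
    | succ n ih =>
      have hind : IndepFun (∑ j ∈ Finset.range n, Y j) (Y n) μ :=
        hindep.indepFun_sum_range_succ hYmeas n
      have hind2 : IndepFun (φ ∘ (∑ j ∈ Finset.range n, Y j)) (φ ∘ Y n) μ :=
        hind.comp hφmeas hφmeas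
      have hle : ∀ ω, φ (∑ i ∈ Finset.range (n + 1), Y i ω)
          = φ ((∑ j ∈ Finset.range n, Y j) ω) * φ (Y n ω) := by
        intro ω
        simp only [hφ, Finset.sum_apply, Finset.sum_range_succ, mul_add, Real.exp_add,
          ENNReal.ofReal_mul (Real.exp_nonneg _)]
      calc (∫⁻ ω, φ (∑ i ∈ Finset.range (n + 1), Y i ω) ∂μ)
          = ∫⁻ ω, (φ ∘ (∑ j ∈ Finset.range n, Y j)) ω * (φ ∘ Y n) ω ∂μ := by
            exact lintegral_congr fun ω => hle ω
        _ = (∫⁻ ω, (φ ∘ (∑ j ∈ Finset.range n, Y j)) ω ∂μ)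
              * ∫⁻ ω, (φ ∘ Y n) ω ∂μ :=
            lintegral_mul_eq_lintegral_mul_lintegral_of_indepFun''
              (hφmeas.comp (by have := hSmeas n; convert this using 1; ext ω; simp : Measurable (∑ j ∈ Finset.range n, Y j))).aemeasurable
              (hφmeas.comp (hYmeas n)).aemeasurable hind2
        _ = q ^ n * q := by
            congr 1
            · calc (∫⁻ ω, (φ ∘ (∑ j ∈ Finset.range n, Y j)) ω ∂μ)
                  = ∫⁻ ω, φ (∑ i ∈ Finset.range n, Y i ω) ∂μ := by
                    exact lintegral_congr fun ω => by simp [Finset.sum_apply]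
                _ = q ^ n := ih
            · exact hYq n
        _ = q ^ (n + 1) := (pow_succ q n).symm
  -- mgf of R0 + S_n
  have hRSq : ∀ n, (∫⁻ ω, φ (R0 ω + ∑ i ∈ Finset.range n, Y i ω) ∂μ) = C * q ^ n := by
    intro n
    set ψ : (ℕ → ℝ) → ℝ≥0∞ := fun v => φ (∑ i ∈ Finset.range n, v i) with hψ
    have hψmeas : Measurable ψ :=
      hφmeas.comp (Finset.measurable_sum _ fun i _ => measurable_pi_apply i)
    have hind2 : IndepFun (φ ∘ R0) (ψ ∘ fun ω => fun n => Y n ω) μ :=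
      hR0indep.comp hφmeas hψmeas
    calc (∫⁻ ω, φ (R0 ω + ∑ i ∈ Finset.range n, Y i ω) ∂μ)
        = ∫⁻ ω, (φ ∘ R0) ω * (ψ ∘ fun ω => fun n => Y n ω) ω ∂μ := by
          refine lintegral_congr fun ω => ?_
          simp only [hφ, hψ, Function.comp_apply, mul_add, Real.exp_add,
            ENNReal.ofReal_mul (Real.exp_nonneg _)]
      _ = (∫⁻ ω, (φ ∘ R0) ω ∂μ) * ∫⁻ ω, (ψ ∘ fun ω => fun n => Y n ω) ω ∂μ :=
          lintegral_mul_eq_lintegral_mul_lintegral_of_indepFun''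
            (hφmeas.comp hR0meas).aemeasurable
            (hψmeas.comp (measurable_pi_lambda _ fun n => hYmeas n)).aemeasurable hind2
      _ = C * q ^ n := by rw [← hSq n]; rfl
  -- Markov bound
  have hMarkov : ∀ n, μ {ω | 0 < R0 ω + ∑ i ∈ Finset.range n, Y i ω} ≤ C * q ^ n := by
    intro n
    have hsub : {ω | 0 < R0 ω + ∑ i ∈ Finset.range n, Y i ω}
        ⊆ {ω | 1 ≤ φ (R0 ω + ∑ i ∈ Finset.range n, Y i ω)} := by
      intro ω hω
      simp only [Set.mem_setOf_eq] at hω ⊢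
      rw [hφ, show (1 : ℝ≥0∞) = ENNReal.ofReal 1 by simp]
      exact ENNReal.ofReal_le_ofReal (by
        rw [← Real.exp_zero]
        exact Real.exp_le_exp.2 (le_of_lt (mul_pos hγ hω)))
    calc μ {ω | 0 < R0 ω + ∑ i ∈ Finset.range n, Y i ω}
        ≤ μ {ω | 1 ≤ φ (R0 ω + ∑ i ∈ Finset.range n, Y i ω)} := measure_mono hsub
      _ = 1 * μ {ω | 1 ≤ φ (R0 ω + ∑ i ∈ Finset.range n, Y i ω)} := (one_mul _).symm
      _ ≤ ∫⁻ ω, φ (R0 ω + ∑ i ∈ Finset.range n, Y i ω) ∂μ :=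
          mul_meas_ge_le_lintegral₀
            ((hφmeas.comp (hR0meas.add (hSmeas n))).aemeasurable) 1
      _ = C * q ^ n := hRSq n
  -- constants
  have hCtop : C ≠ ⊤ := hR0exp.ne
  have hC1 : (1 : ℝ≥0∞) ≤ C := by
    calc (1 : ℝ≥0∞) = ∫⁻ _, (1 : ℝ≥0∞) ∂μ := by simp
      _ ≤ C := lintegral_mono fun ω => by
          rw [show (1 : ℝ≥0∞) = ENNReal.ofReal 1 by simp]
          exact ENNReal.ofReal_le_ofReal (by
            rw [← Real.exp_zero]
            exact Real.exp_le_exp.2 (mul_nonneg hγ.le (hR0pos ω)))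
  set A : ℝ := C.toReal with hA
  have hA1 : 1 ≤ A := by
    rw [hA, ← ENNReal.toReal_one]
    exact ENNReal.toReal_mono hCtop hC1
  refine ⟨A, by linarith, 1 - q', by linarith, fun t ht => ?_⟩
  -- decomposition over the value of Z t
  set B : ℕ → Set Ω := fun n => {ω | 0 < R0 ω + ∑ i ∈ Finset.range n, Y i ω} with hB
  have hBmeas : ∀ n, MeasurableSet (B n) := fun n =>
    measurableSet_lt measurable_const (hR0meas.add (hSmeas n))
  have hdecomp : {ω | 0 < R0 ω + ∑ i ∈ Finset.range (Z t ω), Y i ω}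
      = ⋃ n, B n ∩ {ω | Z t ω = n} := by
    ext ω
    simp only [Set.mem_iUnion, Set.mem_inter_iff, Set.mem_setOf_eq, hB]
    constructor
    · intro h; exact ⟨Z t ω, h, rfl⟩
    · rintro ⟨n, h, rfl⟩; exact h
  have hμeq : μ {ω | 0 < R0 ω + ∑ i ∈ Finset.range (Z t ω), Y i ω}
      = ∑' n, μ (B n ∩ {ω | Z t ω = n}) := by
    rw [hdecomp]
    refine measure_iUnion ?_ fun n => (hBmeas n).inter (hZmeas t (measurableSet_singleton n))
    intro m n hmn
    refine Set.disjoint_left.2 fun ω hm hn => hmn ?_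
    exact hm.2.symm.trans hn.2
  -- independence factorization
  have hfact : ∀ n, μ (B n ∩ {ω | Z t ω = n}) = μ (B n) * μ {ω | Z t ω = n} := by
    intro n
    have hBpre : B n = (fun ω => (R0 ω, fun n => Y n ω)) ⁻¹'
        {p : ℝ × (ℕ → ℝ) | 0 < p.1 + ∑ i ∈ Finset.range n, p.2 i} := rfl
    have hZpre : {ω | Z t ω = n} = Z t ⁻¹' {n} := rfl
    rw [hBpre, hZpre]
    exact (hZindep t).measure_inter_preimage_eq_mul _ _
      (measurableSet_lt measurable_const
        (measurable_fst.add (Finset.measurable_sum _ fun i _ =>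
          (measurable_pi_apply i).comp measurable_snd)))
      (measurableSet_singleton n)
  -- the series bound
  have hterm : ∀ n : ℕ, μ (B n ∩ {ω | Z t ω = n})
      ≤ C * ENNReal.ofReal (q' ^ n * (Real.exp (-t) * t ^ n / n.factorial)) := by
    intro n
    rw [hfact n, hZlaw t ht n]
    calc μ (B n) * ENNReal.ofReal (Real.exp (-t) * t ^ n / n.factorial)
        ≤ (C * q ^ n) * ENNReal.ofReal (Real.exp (-t) * t ^ n / n.factorial) :=
          mul_le_mul_left (hMarkov n) _
      _ = C * ENNReal.ofReal (q' ^ n * (Real.exp (-t) * t ^ n / n.factorial)) := by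
          rw [hqofReal, ← ENNReal.ofReal_pow hq'0, mul_assoc,
            ← ENNReal.ofReal_mul (pow_nonneg hq'0 n)]
  have hsummand_nonneg : ∀ n : ℕ, 0 ≤ q' ^ n * (Real.exp (-t) * t ^ n / n.factorial) := by
    intro n
    positivity
  have hsummable : Summable (fun n : ℕ => q' ^ n * (Real.exp (-t) * t ^ n / n.factorial)) := by
    have := (Real.summable_pow_div_factorial (t * q')).mul_left (Real.exp (-t))
    refine this.congr fun n => ?_
    rw [mul_pow]
    ring
  have hsumval : ∑' n : ℕ, q' ^ n * (Real.exp (-t) * t ^ n / n.factorial)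
      = Real.exp (-(1 - q') * t) := by
    have h1 : ∀ n : ℕ, q' ^ n * (Real.exp (-t) * t ^ n / n.factorial)
        = Real.exp (-t) * ((t * q') ^ n / n.factorial) := by
      intro n; rw [mul_pow]; ring
    rw [tsum_congr h1, tsum_mul_left]
    rw [show (fun n : ℕ => (t * q') ^ n / (n.factorial : ℝ)) =
      fun n : ℕ => (t * q') ^ n / (n.factorial : ℝ) from rfl]
    have : ∑' n : ℕ, (t * q') ^ n / (n.factorial : ℝ) = Real.exp (t * q') := by
      rw [Real.exp_eq_exp_ℝ, NormedSpace.exp_eq_tsum_div]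
    rw [this, ← Real.exp_add]
    congr 1
    ring
  calc μ {ω | 0 < R0 ω + ∑ i ∈ Finset.range (Z t ω), Y i ω}
      = ∑' n, μ (B n ∩ {ω | Z t ω = n}) := hμeq
    _ ≤ ∑' n, C * ENNReal.ofReal (q' ^ n * (Real.exp (-t) * t ^ n / n.factorial)) :=
        ENNReal.tsum_le_tsum hterm
    _ = C * ∑' n, ENNReal.ofReal (q' ^ n * (Real.exp (-t) * t ^ n / n.factorial)) :=
        ENNReal.tsum_mul_left
    _ = C * ENNReal.ofReal (Real.exp (-(1 - q') * t)) := by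
        rw [← ENNReal.ofReal_tsum_of_nonneg hsummand_nonneg hsummable, hsumval]
    _ = ENNReal.ofReal (A * Real.exp (-(1 - q') * t)) := by
        rw [ENNReal.ofReal_mul (by linarith : (0:ℝ) ≤ A), hA, ENNReal.ofReal_toReal hCtop]
end
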